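/- For every A-module P and every k ≥ 0, each linear differential operator Δ : P → Q of order ≤ k factors uniquely through the jet map jetᵏ : P → Jetᵏ(P): there is a unique A-linear map sb(Δ) : Jetᵏ(P) → Q with Δ = sb(Δ) ∘ jetᵏ. This yields a natural bijection Diffᵏ(P,Q) ≅ Hom_A(Jetᵏ(P), Q). -/

import Mathlib

open scoped TensorProduct

/-!
An operator `Δ` of order `≤ k` extends `A`-linearly to `A ⊗_ℝ P` by `a ⊗ p ↦ a • Δ p`. This
extension intertwines `δ^b` on the tensor product with `δ_b` on operators, so it kills every
`δ^{a_0}⋯δ^{a_k}(x)` and descends to `Jetᵏ(P)`. Uniqueness holds because `A ⊗_ℝ P`, hence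
`Jetᵏ(P)`, is generated as an `A`-module by the image of `p ↦ 1 ⊗ p`.
-/

noncomputable section

section Defs

variable (A : Type*) [CommRing A] [Algebra ℝ A]
variable (P : Type*) [AddCommGroup P] [Module ℝ P] [Module A P] [IsScalarTower ℝ A P]

def mulA (b : A) : A →ₗ[ℝ] A := LinearMap.mulLeft ℝ b

def smulP (b : A) : P →ₗ[ℝ] P where
  toFun p := b • p
  map_add' := smul_add b
  map_smul' r p := smul_comm b r p

/-- `δ^b (a ⊗ p) = (ba) ⊗ p − a ⊗ (bp)` on `A ⊗_ℝ P`. -/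
def deltaTensor (b : A) : (A ⊗[ℝ] P) →ₗ[ℝ] (A ⊗[ℝ] P) :=
  TensorProduct.map (mulA A b) LinearMap.id - TensorProduct.map LinearMap.id (smulP A P b)

/-- The `A`-submodule `M_{k+1}` of `A ⊗_ℝ P` spanned by all `δ^{a_0}⋯δ^{a_k}(x)`. -/
def jetSubmodule (k : ℕ) : Submodule A (A ⊗[ℝ] P) :=
  Submodule.span A
    {x : A ⊗[ℝ] P | ∃ (l : List A) (y : A ⊗[ℝ] P),
      l.length = k + 1 ∧ l.foldr (fun b z => deltaTensor A P b z) y = x}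

/-- The `k`-th jet module `Jetᵏ(P)`. -/
def Jet (k : ℕ) := (A ⊗[ℝ] P) ⧸ jetSubmodule A P k

instance (k : ℕ) : AddCommGroup (Jet A P k) :=
  inferInstanceAs (AddCommGroup ((A ⊗[ℝ] P) ⧸ jetSubmodule A P k))

instance (k : ℕ) : Module A (Jet A P k) :=
  inferInstanceAs (Module A ((A ⊗[ℝ] P) ⧸ jetSubmodule A P k))

/-- The jet map `jetᵏ(p) = 1 ⊗ p + M_{k+1}`. -/
def jetMap (k : ℕ) (p : P) : Jet A P k :=
  Submodule.Quotient.mk ((1 : A) ⊗ₜ p)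

/-- `δ_a Δ = a·Δ − Δ·a` on maps between `A`-modules. -/
def deltaOp {Q R : Type*} [AddCommGroup Q] [AddCommGroup R] [Module A Q] [Module A R]
    (a : A) (Δ : Q → R) : Q → R :=
  fun q => a • Δ q - Δ (a • q)

def IsDiffOp {Q R : Type*} [AddCommGroup Q] [AddCommGroup R] [Module A Q] [Module A R]
    (k : ℕ) (Δ : Q → R) : Prop :=
  ∀ l : List A, l.length = k + 1 → l.foldr (deltaOp A) Δ = 0

end Defs

section JetFactorization

variable {A : Type*} [CommRing A] [Algebra ℝ A]
variable {P : Type*} [AddCommGroup P] [Module ℝ P] [Module A P] [IsScalarTower ℝ A P]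
variable {Q : Type*} [AddCommGroup Q] [Module ℝ Q] [Module A Q] [IsScalarTower ℝ A Q]

def deltaOpLinearMap (b : A) (f : P →ₗ[ℝ] Q) : P →ₗ[ℝ] Q where
  toFun := deltaOp A b f
  map_add' p q := by
    simp only [deltaOp, smul_add, map_add]
    abel
  map_smul' r p := by
    simp only [deltaOp, RingHom.id_apply, smul_sub, ← smul_comm r b, map_smul]

lemma coe_deltaOpLinearMap (b : A) (f : P →ₗ[ℝ] Q) :
    ⇑(deltaOpLinearMap b f) = deltaOp A b f := rfl

lemma liftBaseChange_deltaTensor (f : P →ₗ[ℝ] Q) (b : A) (x : A ⊗[ℝ] P) :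
    f.liftBaseChange A (deltaTensor A P b x) = (deltaOpLinearMap b f).liftBaseChange A x := by
  induction x using TensorProduct.induction_on with
  | zero => simp only [map_zero]
  | tmul a p =>
    simp only [deltaTensor, mulA, smulP, LinearMap.sub_apply, TensorProduct.map_tmul,
      LinearMap.mulLeft_apply, LinearMap.id_coe, id_eq, LinearMap.coe_mk, AddHom.coe_mk, map_sub,
      LinearMap.liftBaseChange_tmul, coe_deltaOpLinearMap, deltaOp, smul_sub, mul_smul,
      smul_comm b a]
  | add x y hx hy => simp only [map_add, hx, hy]

lemma liftBaseChange_foldr_deltaTensor_eq_zero (l : List A) (f : P →ₗ[ℝ] Q)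
    (hf : l.foldl (fun g b => deltaOp A b g) ⇑f = 0) (y : A ⊗[ℝ] P) :
    f.liftBaseChange A (l.foldr (fun b z => deltaTensor A P b z) y) = 0 := by
  induction l generalizing f with
  | nil =>
    obtain rfl : f = 0 := DFunLike.coe_injective hf
    exact LinearMap.congr_fun (map_zero (LinearMap.liftBaseChangeEquiv A)) y
  | cons b l ih =>
    rw [List.foldr_cons, liftBaseChange_deltaTensor]
    exact ih _ hf

lemma jetSubmodule_le_ker_liftBaseChange (k : ℕ) {Δ : P →ₗ[ℝ] Q} (hΔ : IsDiffOp A k Δ) :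
    jetSubmodule A P k ≤ LinearMap.ker (Δ.liftBaseChange A) := by
  rw [jetSubmodule, Submodule.span_le]
  rintro _ ⟨l, y, hl, rfl⟩
  refine liftBaseChange_foldr_deltaTensor_eq_zero l Δ ?_ y
  rw [← List.foldr_reverse]
  exact hΔ l.reverse (by rw [List.length_reverse, hl])

lemma Jet.hom_ext (k : ℕ) {f g : Jet A P k →ₗ[A] Q}
    (h : ∀ p, f (jetMap A P k p) = g (jetMap A P k p)) : f = g :=
  Submodule.linearMap_qext _ <| (LinearMap.liftBaseChangeEquiv A).symm.injective <|
    LinearMap.ext h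

end JetFactorization

theorem diffOp_factors_uniquely_through_jet
    {A : Type*} [CommRing A] [Algebra ℝ A]
    {P : Type*} [AddCommGroup P] [Module ℝ P] [Module A P] [IsScalarTower ℝ A P]
    {Q : Type*} [AddCommGroup Q] [Module ℝ Q] [Module A Q] [IsScalarTower ℝ A Q]
    (k : ℕ) (Δ : P →ₗ[ℝ] Q) (hΔ : IsDiffOp A k ⇑Δ) :
    ∃! sb : Jet A P k →ₗ[A] Q, ∀ p : P, Δ p = sb (jetMap A P k p) := by
  refine ⟨(jetSubmodule A P k).liftQ (Δ.liftBaseChange A)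
      (jetSubmodule_le_ker_liftBaseChange k hΔ), fun p => ?_, fun sb hsb => ?_⟩
  · exact (Δ.liftBaseChange_one_tmul A p).symm
  · exact Jet.hom_ext k fun p => (hsb p).symm.trans (Δ.liftBaseChange_one_tmul A p).symm
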